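/- arXiv:2412.02534 — 4 statements merged into one kernel-verified Lean document; each statement's English description precedes it below -/
import Mathlib

section
/- For all coprime integers h, k with k ≥ 1 odd and 0 ≤ h < k, the complex number ω_{h,k}/ω_{2h,k}^2 is not a negative real number (equivalently, since it has modulus 1, ω_{h,k}/ω_{2h,k}^2 ≠ −1). -/
open scoped Real
open MeasureTheory

noncomputable section

open Classical in
/-- The sawtooth function `((x))`. -/
def saw (x : ℝ) : ℝ := if ∃ m : ℤ, x = m then 0 else x - ⌊x⌋ - 1/2

/-- The Dedekind sum `s(h,k)`. -/
def dedekindS (h k : ℤ) : ℝ :=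
  ∑ μ ∈ Finset.range k.toNat, saw ((μ : ℝ) / (k : ℝ)) * saw ((h : ℝ) * (μ : ℝ) / (k : ℝ))

/-- The multiplier `ω_{h,k} = e^{π i s(h,k)}`. -/
def omegaHK (h k : ℤ) : ℂ := Complex.exp (Real.pi * Complex.I * dedekindS h k)

/-- The modified Bessel function of the first kind of integer order. -/
def besselI (m : ℤ) (x : ℝ) : ℝ :=
  (1 / Real.pi) * ∫ θ in (0:ℝ)..Real.pi, Real.cos (m * θ) * Real.exp (x * Real.cos θ)

/-- `X_k(n) = π √(24n+1) / (6 √2 k)`. -/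
def Xkn (k : ℤ) (n : ℕ) : ℝ := Real.pi * Real.sqrt (24 * n + 1) / (6 * Real.sqrt 2 * k)

/-- `s₁(n)`: the sum of reciprocals of parts over all partitions of `n` into distinct parts. -/
def s1 (n : ℕ) : ℝ := ∑ p ∈ Nat.Partition.distincts n, ((p.parts.map fun j => (1:ℝ) / j).sum)

/-!
Put `R(h) = ∑_{μ<k} μ (hμ mod k)`, so that `4k² s(h,k) = 4R(h) - k²(k-1)`, and
`R(2h) = 2R(h) - kT` where `T = ∑ μ ⌊2(hμ mod k)/k⌋` counts the wrap-arounds of doubling.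
Because `μ ↦ hμ mod k` permutes the residues and `hμ - (hμ mod k)` is a multiple of `k`,
`2hR(h) ≡ (h²+1) ∑ μ² (mod k²)` and `hT ≡ ∑_{k/2<μ<k} μ (mod k)`, and for odd `k` eight times
the last sum is `(k-1)(3k-1) ≡ 1 (mod k)`.
If `s(h,k) - 2s(2h,k)` were an integer, these relations would force `k ∣ h²`, i.e. `k = 1`,
where the difference is `0`. Since `ω_{h,k}/ω_{2h,k}² = e^{πi(s(h,k) - 2s(2h,k))}` has modulus `1`,
it is a negative real only if it is `-1`, i.e. only if the exponent is an odd integer.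
-/
open Finset

theorem Int.emod_mul_emod_of_mul_modEq_one {a h k μ : ℤ} (hah : a * h ≡ 1 [ZMOD k])
    (hμ₀ : 0 ≤ μ) (hμk : μ < k) : a * (h * μ % k) % k = μ := by
  have key : a * (h * μ % k) ≡ μ [ZMOD k] :=
    calc a * (h * μ % k) ≡ a * (h * μ) [ZMOD k] := (Int.mod_modEq _ _).mul_left a
      _ = a * h * μ := by ring
      _ ≡ 1 * μ [ZMOD k] := hah.mul_right μ
      _ = μ := one_mul μ
  rw [key, Int.emod_eq_of_lt hμ₀ hμk]

theorem sum_range_comp_mul_emod {M : Type*} [AddCommMonoid M] {h : ℤ} {k : ℕ}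
    (hcop : IsCoprime h k) (f : ℤ → M) :
    ∑ μ ∈ range k, f (h * μ % k) = ∑ μ ∈ range k, f μ := by
  obtain ⟨a, b, hab⟩ := hcop
  have hah : a * h ≡ 1 [ZMOD k] := Int.modEq_iff_dvd.2 ⟨b, by linear_combination -hab⟩
  have hha : h * a ≡ 1 [ZMOD k] := by rwa [mul_comm]
  have hbounds : ∀ c : ℤ, ∀ μ ∈ range k, 0 ≤ c * μ % k ∧ c * μ % k < k := fun c μ hμ =>
    ⟨Int.emod_nonneg _ (by grind), Int.emod_lt_of_pos _ (by grind)⟩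
  refine sum_nbij' (fun μ => (h * μ % k).toNat) (fun ν => (a * ν % k).toNat) ?_ ?_ ?_ ?_ ?_
  · intro μ hμ; have := hbounds h μ hμ; simp only [mem_range]; omega
  · intro ν hν; have := hbounds a ν hν; simp only [mem_range]; omega
  · intro μ hμ
    rw [Int.toNat_of_nonneg (hbounds h μ hμ).1, Int.emod_mul_emod_of_mul_modEq_one hah
      (Int.natCast_nonneg μ) (by exact_mod_cast mem_range.1 hμ), Int.toNat_natCast]
  · intro ν hν
    rw [Int.toNat_of_nonneg (hbounds a ν hν).1, Int.emod_mul_emod_of_mul_modEq_one hha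
      (Int.natCast_nonneg ν) (by exact_mod_cast mem_range.1 hν), Int.toNat_natCast]
  · intro μ hμ
    simp only [Int.toNat_of_nonneg (hbounds h μ hμ).1]

theorem saw_zero : saw 0 = 0 := if_pos ⟨0, by simp⟩

theorem dedekindS_one (h : ℤ) : dedekindS h 1 = 0 := by
  simp [dedekindS, saw_zero]

theorem saw_intCast_div {a : ℤ} {k : ℕ} (hk : 0 < k) (ha : ¬ (k : ℤ) ∣ a) :
    saw (a / k) = (a % k : ℤ) / k - 1 / 2 := by
  have hkR : (0 : ℝ) < k := by exact_mod_cast hk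
  have hk' : (0 : ℤ) < k := by exact_mod_cast hk
  have hfrac₀ : (0 : ℝ) ≤ (a % k : ℤ) / k :=
    div_nonneg (by exact_mod_cast Int.emod_nonneg a hk'.ne') hkR.le
  have hfrac₁ : ((a % k : ℤ) : ℝ) / k < 1 := by
    rw [div_lt_one hkR]; exact_mod_cast Int.emod_lt_of_pos a hk'
  have hsplit : (a : ℝ) / k = (a / k : ℤ) + ((a % k : ℤ) : ℝ) / k := by
    field_simp
    exact_mod_cast (Int.mul_ediv_add_emod a k).symm
  have hnotInt : ¬ ∃ m : ℤ, (a : ℝ) / k = m := by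
    rintro ⟨m, hm⟩
    exact ha ⟨m, by rw [div_eq_iff hkR.ne'] at hm; exact_mod_cast hm.trans (mul_comm _ _)⟩
  rw [saw, if_neg hnotInt, hsplit, Int.floor_intCast_add, Int.floor_eq_zero_iff.2 ⟨hfrac₀, hfrac₁⟩]
  push_cast
  ring

theorem sum_range_natCast_mul_two (n : ℕ) : (∑ μ ∈ range n, (μ : ℤ)) * 2 = n * (n - 1) := by
  induction n with
  | zero => simp
  | succ n ih => rw [sum_range_succ]; push_cast; linear_combination ih

theorem sum_range_natCast_sq_mul_six (n : ℕ) :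
    (∑ μ ∈ range n, (μ : ℤ) ^ 2) * 6 = n * (n - 1) * (2 * n - 1) := by
  induction n with
  | zero => simp
  | succ n ih => rw [sum_range_succ]; push_cast; linear_combination ih

def dedekindR (h : ℤ) (k : ℕ) : ℤ := ∑ μ ∈ range k, μ * (h * μ % k)

-- The `μ = 0` term of `s(h,k)` vanishes, whereas the product formula would give `k²`.
theorem four_mul_sq_mul_saw_mul_saw {h : ℤ} {k μ : ℕ} (hcop : IsCoprime h k) (hμ : μ < k) :
    4 * (k : ℝ) ^ 2 * (saw (μ / k) * saw (h * μ / k)) =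
      ((2 * μ - k) * (2 * (h * μ % k) - k) - if μ = 0 then (k : ℤ) ^ 2 else 0 : ℤ) := by
  rcases Nat.eq_zero_or_pos μ with rfl | hμ₀
  · simp [saw_zero, sq]
  have hk : 0 < k := hμ₀.trans hμ
  have hμ_ndvd : ¬ (k : ℤ) ∣ μ := by
    rw [Int.natCast_dvd_natCast]; exact Nat.not_dvd_of_pos_of_lt hμ₀ hμ
  have hhμ_ndvd : ¬ (k : ℤ) ∣ h * μ := fun hdvd =>
    hμ_ndvd (hcop.symm.dvd_of_dvd_mul_left hdvd)
  have hsaw_μ := saw_intCast_div hk hμ_ndvd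
  have hsaw_hμ := saw_intCast_div hk hhμ_ndvd
  rw [Int.emod_eq_of_lt (by positivity) (by exact_mod_cast hμ)] at hsaw_μ
  push_cast at hsaw_μ hsaw_hμ
  rw [hsaw_μ, hsaw_hμ, if_neg hμ₀.ne']
  have hkR : (k : ℝ) ≠ 0 := by positivity
  push_cast
  field_simp
  ring

theorem four_mul_sq_mul_dedekindS {h : ℤ} {k : ℕ} (hcop : IsCoprime h k) (hk : 0 < k) :
    4 * (k : ℝ) ^ 2 * dedekindS h k = (4 * dedekindR h k - k ^ 2 * (k - 1) : ℤ) := by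
  have hsum_emod : ∑ μ ∈ range k, (h * μ % k) = ∑ μ ∈ range k, (μ : ℤ) :=
    sum_range_comp_mul_emod hcop id
  have hgauss := sum_range_natCast_mul_two k
  simp only [dedekindS, Int.toNat_natCast, Int.cast_natCast, mul_sum]
  rw [sum_congr rfl fun μ hμ => four_mul_sq_mul_saw_mul_saw hcop (mem_range.1 hμ), ← Int.cast_sum]
  congr 1
  have hexpand : ∀ μ ∈ range k, (2 * μ - k) * (2 * (h * μ % k) - k) -
      (if μ = 0 then (k : ℤ) ^ 2 else 0) = 4 * (μ * (h * μ % k)) - 2 * k * μ -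
        2 * k * (h * μ % k) + k ^ 2 - if μ = 0 then (k : ℤ) ^ 2 else 0 := fun μ _ => by ring
  rw [sum_congr rfl hexpand]
  simp only [sum_sub_distrib, sum_add_distrib, ← mul_sum, sum_const, card_range, sum_ite_eq',
    mem_range, if_pos hk, nsmul_eq_mul, hsum_emod, dedekindR]
  linear_combination (-2 * k : ℤ) * hgauss

theorem two_mul_dedekindR_modEq {h : ℤ} {k : ℕ} (hcop : IsCoprime h k) :
    2 * h * dedekindR h k ≡ (h ^ 2 + 1) * ∑ μ ∈ range k, (μ : ℤ) ^ 2 [ZMOD k ^ 2] := by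
  have hsq : ∑ μ ∈ range k, (h * μ % k) ^ 2 = ∑ μ ∈ range k, (μ : ℤ) ^ 2 :=
    sum_range_comp_mul_emod hcop (· ^ 2)
  have hdiff : (h ^ 2 + 1) * ∑ μ ∈ range k, (μ : ℤ) ^ 2 - 2 * h * dedekindR h k =
      ∑ μ ∈ range k, (h * μ - h * μ % k) ^ 2 := by
    rw [add_mul, one_mul]
    nth_rw 2 [← hsq]
    simp only [dedekindR, mul_sum, ← sum_add_distrib, ← sum_sub_distrib]
    exact sum_congr rfl fun μ _ => by ring
  exact Int.modEq_iff_dvd.2 <| hdiff ▸ dvd_sum fun μ _ => pow_dvd_pow_of_dvd Int.dvd_self_sub_emod 2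

def doublingCarry (h : ℤ) (k : ℕ) : ℤ := ∑ μ ∈ range k, μ * (2 * (h * μ % k) / k)

theorem dedekindR_two_mul (h : ℤ) (k : ℕ) :
    dedekindR (2 * h) k = 2 * dedekindR h k - k * doublingCarry h k := by
  simp only [dedekindR, doublingCarry, mul_sum, ← sum_sub_distrib]
  refine sum_congr rfl fun μ _ => ?_
  have hdouble : 2 * h * μ % k = 2 * (h * μ % k) % k := by
    rw [mul_assoc]; exact ((Int.mod_modEq (h * μ) k).mul_left 2).symm
  rw [hdouble, Int.emod_def (2 * _)]
  ring

theorem mul_doublingCarry_modEq {h : ℤ} {k : ℕ} (hcop : IsCoprime h k) :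
    h * doublingCarry h k ≡ ∑ μ ∈ range k, μ * (2 * μ / k) [ZMOD k] := by
  have hperm : ∑ μ ∈ range k, (h * μ % k) * (2 * (h * μ % k) / k) =
      ∑ μ ∈ range k, (μ : ℤ) * (2 * μ / k) :=
    sum_range_comp_mul_emod hcop fun r => r * (2 * r / k)
  refine Int.modEq_iff_dvd.2 ?_
  rw [← hperm, doublingCarry, mul_sum, ← sum_sub_distrib]
  refine dvd_sum fun μ _ => ?_
  have hr : (k : ℤ) ∣ h * μ % k - h * μ := by
    rw [← neg_sub, dvd_neg]; exact Int.dvd_self_sub_emod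
  convert hr.mul_right (2 * (h * μ % k) / k) using 1
  ring

theorem eight_mul_sum_range_mul_two_mul_div {k : ℕ} (hk : Odd k) :
    8 * ∑ μ ∈ range k, (μ : ℤ) * (2 * μ / k) = (k - 1) * (3 * k - 1) := by
  obtain ⟨a, rfl⟩ := hk
  have hlow : ∀ μ ∈ range (a + 1), (μ : ℤ) * (2 * μ / (2 * a + 1 : ℕ)) = 0 := fun μ hμ => by
    have := mem_range.1 hμ
    rw [Int.ediv_eq_zero_of_lt (by positivity) (by push_cast; omega), mul_zero]
  have hhigh : ∀ i ∈ range (2 * a + 1 - (a + 1)),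
      ((a + 1 + i : ℕ) : ℤ) * (2 * (a + 1 + i : ℕ) / (2 * a + 1 : ℕ)) = a + 1 + i := fun i hi => by
    have := mem_range.1 hi
    rw [(Int.ediv_eq_iff_of_pos (y := 1) (by positivity)).2 (by push_cast; omega)]
    push_cast; ring
  rw [← sum_range_add_sum_Ico _ (by omega : a + 1 ≤ 2 * a + 1), sum_Ico_eq_sum_range,
    sum_congr rfl hlow, sum_congr rfl hhigh, sum_const_zero, zero_add,
    show 2 * a + 1 - (a + 1) = a by omega, sum_add_distrib, sum_const, card_range, nsmul_eq_mul]
  push_cast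
  linear_combination 4 * sum_range_natCast_mul_two a

theorem eq_one_of_dedekindS_sub_two_mul_dedekindS_eq_intCast {h : ℤ} {k : ℕ} (hk : Odd k)
    (hcop : IsCoprime h k) {m : ℤ} (hm : dedekindS h k - 2 * dedekindS (2 * h) k = m) :
    k = 1 := by
  have hk₀ : 0 < k := hk.pos
  have hcop₂ : IsCoprime (2 * h) k := by
    obtain ⟨j, rfl⟩ := hk
    exact IsCoprime.mul_left ⟨-j, 1, by push_cast; ring⟩ hcop
  have hR : 4 * dedekindR h k - 8 * dedekindR (2 * h) k + k ^ 2 * (k - 1) = 4 * k ^ 2 * m := by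
    have hs := four_mul_sq_mul_dedekindS hcop hk₀
    have hs₂ := four_mul_sq_mul_dedekindS hcop₂ hk₀
    push_cast at hs hs₂
    have hRℝ : ((4 * dedekindR h k - 8 * dedekindR (2 * h) k + k ^ 2 * (k - 1) : ℤ) : ℝ) =
        (4 * k ^ 2 * m : ℤ) := by
      push_cast
      linear_combination -hs + 2 * hs₂ + 4 * (k : ℝ) ^ 2 * hm
    exact_mod_cast hRℝ
  have hR₂ := dedekindR_two_mul h k
  obtain ⟨x, hx⟩ := (two_mul_dedekindR_modEq hcop).dvd
  obtain ⟨y, hy⟩ := (mul_doublingCarry_modEq hcop).dvd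
  have hQ := sum_range_natCast_sq_mul_six k
  have hW := eight_mul_sum_range_mul_two_mul_div hk
  -- `h * hR`, reduced modulo `k²` by the other relations, leaves `k * h² ≡ 0`.
  have hdvd : (k : ℤ) ∣ h ^ 2 := by
    refine ⟨h ^ 2 * (3 - 2 * k) + k - 1 + 6 * x - 8 * y + h * (k - 1) - 4 * h * m,
      mul_left_cancel₀ (by positivity : (k : ℤ) ≠ 0) ?_⟩
    linear_combination -h * hR - 8 * h * hR₂ + 6 * hx - (h ^ 2 + 1) * hQ + k * hW - 8 * k * hy
  have hunit : IsUnit (k : ℤ) := hcop.pow_left.isUnit_of_dvd' hdvd dvd_rfl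
  rcases Int.isUnit_iff.1 hunit with hk₁ | hk₁ <;> omega

theorem exists_eq_two_mul_add_one_of_exp_eq_neg {t r : ℝ} (hr : r < 0)
    (h : Complex.exp (π * Complex.I * t) = r) : ∃ n : ℤ, t = 2 * n + 1 := by
  have hnorm : ‖Complex.exp (π * Complex.I * t)‖ = 1 := by
    rw [show (π : ℂ) * Complex.I * t = (π * t : ℝ) * Complex.I by push_cast; ring]
    exact Complex.norm_exp_ofReal_mul_I _
  have hr₁ : r = -1 := by
    rw [h, Complex.norm_real, Real.norm_eq_abs, abs_of_neg hr] at hnorm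
    linarith
  rw [hr₁, Complex.ofReal_neg, Complex.ofReal_one, ← Complex.exp_pi_mul_I,
    Complex.exp_eq_exp_iff_exists_int] at h
  obtain ⟨n, hn⟩ := h
  refine ⟨n, ?_⟩
  have hπI : (π : ℂ) * Complex.I ≠ 0 := by simp [Real.pi_ne_zero]
  exact_mod_cast mul_left_cancel₀ hπI
    (by linear_combination hn : (π : ℂ) * Complex.I * t = π * Complex.I * (2 * n + 1))

theorem stmt4_general (h k : ℤ) (hk : 1 ≤ k) (hodd : Odd k)
    (hcop : IsCoprime h k) :
    ∀ r : ℝ, r < 0 → omegaHK h k / omegaHK (2 * h) k ^ 2 ≠ (r : ℂ) := by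
  intro r hr hquot
  have hexp : omegaHK h k / omegaHK (2 * h) k ^ 2 =
      Complex.exp (π * Complex.I * (dedekindS h k - 2 * dedekindS (2 * h) k : ℝ)) := by
    rw [omegaHK, omegaHK, ← Complex.exp_nat_mul, ← Complex.exp_sub]
    congr 1
    push_cast
    ring
  obtain ⟨n, hn⟩ := exists_eq_two_mul_add_one_of_exp_eq_neg hr (hexp ▸ hquot)
  lift k to ℕ using by omega
  obtain rfl : k = 1 := eq_one_of_dedekindS_sub_two_mul_dedekindS_eq_intCast
    (by exact_mod_cast hodd) hcop (m := 2 * n + 1) (by rw [hn]; push_cast; ring)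
  rw [Nat.cast_one, dedekindS_one, dedekindS_one] at hn
  exact absurd (by exact_mod_cast hn : (0 : ℤ) - 2 * 0 = 2 * n + 1) (by omega)

theorem stmt4 (h k : ℤ) (hk : 1 ≤ k) (hodd : Odd k) (hh : 0 ≤ h) (hhk : h < k)
    (hcop : IsCoprime h k) :
    ∀ r : ℝ, r < 0 → omegaHK h k / omegaHK (2 * h) k ^ 2 ≠ (r : ℂ) :=
  stmt4_general h k hk hodd hcop
end
end

section
/- There exist constants C > 0 and x_0 > 0 such that for all real x ≥ x_0, | 𝕀(x) − √(π/2) · e^x · x^{−3/2} | ≤ C e^x x^{−5/2}. -/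
/-!
Write `𝕀(x) = eˣ ∫₀^π θ² cos θ e^{-x(1 - cos θ)} dθ` and compare it with the Gaussian integral
`∫₀^∞ θ² e^{-xθ²/2} dθ = √(π/2) x^{-3/2}`. On `[0, π]` we have `1 - cos θ ≥ θ²/5` and
`1 - cos θ = θ²/2 + O(θ⁴)`, so the two integrands differ by at most `(θ⁴ + xθ⁶) e^{-xθ²/5}`; beyond `π`
the Gaussian alone obeys the same bound. The Gamma-function moments of this majorant are a constant
times `x^{-5/2}`, for every `x > 0`.
-/

open scoped Real

noncomputable section

/-- The Bessel-type integral `𝕀(x) = ∫_0^π θ² cos θ e^{x cos θ} dθ`. -/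
def besselII (x : ℝ) : ℝ := ∫ θ in (0:ℝ)..Real.pi, θ ^ 2 * Real.cos θ * Real.exp (x * Real.cos θ)

open Real MeasureTheory Set

lemma integrableOn_pow_mul_exp_neg_mul_sq (n : ℕ) {b : ℝ} (hb : 0 < b) :
    IntegrableOn (fun θ : ℝ => θ ^ n * exp (-b * θ ^ 2)) (Ioi 0) := by
  simpa only [rpow_natCast] using
    integrableOn_rpow_mul_exp_neg_mul_sq hb (s := n) (by linarith [n.cast_nonneg (α := ℝ)])

lemma integral_pow_mul_exp_neg_div_mul_sq (n : ℕ) {c x : ℝ} (hc : 0 < c) (hx : 0 < x) :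
    ∫ θ in Ioi (0:ℝ), θ ^ n * exp (-(x / c) * θ ^ 2) =
      Gamma ((n + 1) / 2) / 2 * c ^ (((n:ℝ) + 1) / 2) * x ^ (-((n:ℝ) + 1) / 2) := by
  have h := integral_rpow_mul_exp_neg_mul_rpow two_pos (q := n)
    (by linarith [n.cast_nonneg (α := ℝ)]) (div_pos hx hc)
  simp only [rpow_two, rpow_natCast] at h
  rw [h, div_rpow hx.le hc.le, neg_div, rpow_neg hc.le]
  field_simp

lemma cos_sub_one_add_sq_div_two_le (θ : ℝ) : cos θ - (1 - θ ^ 2 / 2) ≤ θ ^ 4 / 2 := by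
  rcases le_or_gt |θ| 1 with h | h
  · have := (abs_le.1 (cos_bound h)).2
    rw [pow_abs, abs_of_nonneg (by positivity)] at this
    nlinarith [sq_nonneg θ]
  · have h1 : 1 ≤ θ ^ 2 := by nlinarith [sq_abs θ]
    nlinarith [cos_le_one θ]

lemma abs_exp_neg_sub_exp_neg_le {a b m : ℝ} (ha : m ≤ a) (hb : m ≤ b) :
    |exp (-a) - exp (-b)| ≤ |a - b| * exp (-m) := by
  wlog hab : a ≤ b generalizing a b
  · rw [abs_sub_comm, abs_sub_comm a]; exact this hb ha (le_of_not_ge hab)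
  have hexp : exp (-a) - exp (-b) = exp (-a) * (1 - exp (a - b)) := by
    rw [mul_sub, mul_one, ← exp_add]; ring_nf
  have h1 : 1 - exp (a - b) ≤ b - a := by linarith [add_one_le_exp (a - b)]
  have h2 : 0 ≤ 1 - exp (a - b) := by linarith [exp_le_one_iff.2 (sub_nonpos.2 hab)]
  rw [hexp, abs_of_nonneg (mul_nonneg (exp_pos _).le h2), abs_of_nonpos (sub_nonpos.2 hab), neg_sub,
    mul_comm (b - a)]
  exact mul_le_mul (exp_le_exp.2 (neg_le_neg ha)) h1 h2 (exp_pos _).le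

lemma sq_div_five_le_one_sub_cos {θ : ℝ} (hθ : |θ| ≤ π) : θ ^ 2 / 5 ≤ 1 - cos θ := by
  have hπ : π ^ 2 ≤ 10 := by nlinarith [pi_lt_d2, pi_pos]
  have : θ ^ 2 / 5 ≤ 2 / π ^ 2 * θ ^ 2 := by
    rw [div_mul_eq_mul_div, div_le_div_iff₀ (by norm_num) (by positivity)]
    nlinarith [sq_nonneg θ]
  linarith [cos_le_one_sub_mul_cos_sq hθ]

lemma abs_integrand_sub_gaussian_le {x θ : ℝ} (hx : 0 ≤ x) (hθ : |θ| ≤ π) :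
    |θ ^ 2 * cos θ * exp (-x * (1 - cos θ)) - θ ^ 2 * exp (-(x / 2) * θ ^ 2)| ≤
      θ ^ 4 * exp (-(x / 5) * θ ^ 2) + x * (θ ^ 6 * exp (-(x / 5) * θ ^ 2)) := by
  have hlow := sq_div_five_le_one_sub_cos hθ
  have hcos : |cos θ - 1| ≤ θ ^ 2 := by
    rw [abs_le]; constructor <;> nlinarith [one_sub_sq_div_two_le_cos (x := θ), cos_le_one θ]
  have hquad : |x * (1 - cos θ) - x / 2 * θ ^ 2| ≤ x * θ ^ 4 := by
    rw [show x * (1 - cos θ) - x / 2 * θ ^ 2 = x * ((1 - cos θ) - θ ^ 2 / 2) by ring, abs_mul,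
      abs_of_nonneg hx]
    refine mul_le_mul_of_nonneg_left ?_ hx
    rw [abs_le]; constructor <;>
      nlinarith [one_sub_sq_div_two_le_cos (x := θ), cos_sub_one_add_sq_div_two_le θ, sq_nonneg θ]
  have hdecay : exp (-x * (1 - cos θ)) ≤ exp (-(x / 5) * θ ^ 2) :=
    exp_le_exp.2 (by nlinarith)
  have hdiff : |exp (-(x * (1 - cos θ))) - exp (-(x / 2 * θ ^ 2))| ≤
      x * θ ^ 4 * exp (-(x / 5 * θ ^ 2)) :=
    (abs_exp_neg_sub_exp_neg_le (by nlinarith) (by nlinarith [sq_nonneg θ])).trans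
      (mul_le_mul_of_nonneg_right hquad (exp_pos _).le)
  calc _ = |θ ^ 2 * (cos θ - 1) * exp (-x * (1 - cos θ))
          + θ ^ 2 * (exp (-(x * (1 - cos θ))) - exp (-(x / 2 * θ ^ 2)))| := by ring_nf
    _ ≤ θ ^ 2 * θ ^ 2 * exp (-(x / 5) * θ ^ 2)
          + θ ^ 2 * (x * θ ^ 4 * exp (-(x / 5 * θ ^ 2))) := by
      refine (abs_add_le _ _).trans (add_le_add ?_ ?_) <;>
        simp only [abs_mul, abs_of_nonneg (sq_nonneg θ), abs_of_pos (exp_pos _)] <;> gcongr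
    _ = _ := by ring_nf

lemma sq_mul_exp_le_of_one_le {x θ : ℝ} (hx : 0 ≤ x) (hθ : 1 ≤ θ) :
    θ ^ 2 * exp (-(x / 2) * θ ^ 2) ≤ θ ^ 4 * exp (-(x / 5) * θ ^ 2) := by
  refine mul_le_mul (pow_le_pow_right₀ hθ (by norm_num)) (exp_le_exp.2 ?_) (exp_pos _).le
    (by positivity)
  nlinarith [sq_nonneg θ]

lemma abs_integral_sub_gaussian_le {x : ℝ} (hx : 0 < x) :
    |(∫ θ in Ioc 0 π, θ ^ 2 * cos θ * exp (-x * (1 - cos θ)))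
        - ∫ θ in Ioi 0, θ ^ 2 * exp (-(x / 2) * θ ^ 2)| ≤
      ∫ θ in Ioi 0, (θ ^ 4 * exp (-(x / 5) * θ ^ 2) + x * (θ ^ 6 * exp (-(x / 5) * θ ^ 2))) := by
  set f := fun θ : ℝ => θ ^ 2 * cos θ * exp (-x * (1 - cos θ))
  have hf : IntegrableOn ((Iic π).indicator f) (Ioi 0) := by
    rw [IntegrableOn, integrable_indicator_iff measurableSet_Iic, IntegrableOn,
      Measure.restrict_restrict measurableSet_Iic, Iic_inter_Ioi]
    exact (by fun_prop : Continuous f).integrableOn_Ioc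
  rw [← Ioi_inter_Iic, ← setIntegral_indicator measurableSet_Iic, ← Real.norm_eq_abs,
    ← integral_sub hf (integrableOn_pow_mul_exp_neg_mul_sq 2 (by positivity))]
  refine norm_integral_le_of_norm_le ((integrableOn_pow_mul_exp_neg_mul_sq 4 (by positivity)).add
    ((integrableOn_pow_mul_exp_neg_mul_sq 6 (by positivity)).const_mul x)) ?_
  refine (ae_restrict_iff' measurableSet_Ioi).2 (.of_forall fun θ (hθ : 0 < θ) => ?_)
  rw [Real.norm_eq_abs]
  by_cases hθπ : θ ≤ π
  · rw [indicator_of_mem (show θ ∈ Iic π from hθπ)]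
    exact abs_integrand_sub_gaussian_le hx.le (abs_le.2 ⟨by linarith [pi_pos], hθπ⟩)
  · rw [indicator_of_notMem (show θ ∉ Iic π from hθπ), zero_sub, abs_neg,
      abs_of_nonneg (by positivity)]
    have h1θ : 1 ≤ θ := by linarith [pi_gt_three]
    exact (sq_mul_exp_le_of_one_le hx.le h1θ).trans (le_add_of_nonneg_right (by positivity))

lemma exists_abs_integral_sub_gaussian_le : ∃ C > 0, ∀ x > 0,
    |(∫ θ in Ioc 0 π, θ ^ 2 * cos θ * exp (-x * (1 - cos θ)))
        - ∫ θ in Ioi 0, θ ^ 2 * exp (-(x / 2) * θ ^ 2)| ≤ C * x ^ (-(5:ℝ) / 2) := by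
  refine ⟨Gamma (5 / 2) / 2 * 5 ^ ((5:ℝ) / 2) + Gamma (7 / 2) / 2 * 5 ^ ((7:ℝ) / 2),
    by positivity [Gamma_pos_of_pos (by norm_num : (0:ℝ) < 5 / 2),
      Gamma_pos_of_pos (by norm_num : (0:ℝ) < 7 / 2)], fun x hx => ?_⟩
  refine (abs_integral_sub_gaussian_le hx).trans_eq ?_
  rw [integral_add (integrableOn_pow_mul_exp_neg_mul_sq 4 (by positivity))
      ((integrableOn_pow_mul_exp_neg_mul_sq 6 (by positivity)).const_mul x),
    integral_const_mul, integral_pow_mul_exp_neg_div_mul_sq 4 (by norm_num) hx,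
    integral_pow_mul_exp_neg_div_mul_sq 6 (by norm_num) hx]
  have hx7 : x * x ^ (-(7:ℝ) / 2) = x ^ (-(5:ℝ) / 2) := by
    rw [mul_comm, ← rpow_add_one hx.ne']; norm_num
  push_cast
  rw [show (4:ℝ) + 1 = 5 by norm_num, show (6:ℝ) + 1 = 7 by norm_num, ← hx7]
  ring

lemma integral_sq_mul_exp_neg_half_mul_sq {x : ℝ} (hx : 0 < x) :
    ∫ θ in Ioi 0, θ ^ 2 * exp (-(x / 2) * θ ^ 2) = √(π / 2) * x ^ (-(3:ℝ) / 2) := by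
  rw [integral_pow_mul_exp_neg_div_mul_sq 2 two_pos hx]
  have hΓ : Gamma (3 / 2) = √π / 2 := by
    rw [show (3:ℝ) / 2 = 1 / 2 + 1 by norm_num, Gamma_add_one (by norm_num), Gamma_one_half_eq]
    ring
  have h2 : (2:ℝ) ^ ((3:ℝ) / 2) = 2 * √2 := by
    rw [show (3:ℝ) / 2 = 1 + 1 / 2 by norm_num, rpow_add two_pos, rpow_one, ← sqrt_eq_rpow]
  push_cast
  rw [show (2:ℝ) + 1 = 3 by norm_num, hΓ, h2, sqrt_div pi_pos.le]
  congr 1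
  field_simp
  rw [sq_sqrt zero_le_two]

lemma besselII_eq_exp_mul (x : ℝ) :
    besselII x = exp x * ∫ θ in Ioc 0 π, θ ^ 2 * cos θ * exp (-x * (1 - cos θ)) := by
  rw [besselII, intervalIntegral.integral_of_le pi_pos.le, ← integral_const_mul]
  refine setIntegral_congr_fun measurableSet_Ioc fun θ _ => ?_
  rw [mul_left_comm, ← exp_add]
  ring_nf

theorem stmt6 : ∃ C : ℝ, 0 < C ∧ ∃ x₀ : ℝ, 0 < x₀ ∧ ∀ x : ℝ, x₀ ≤ x →
    |besselII x - Real.sqrt (Real.pi / 2) * Real.exp x * x ^ (-(3:ℝ)/2)| ≤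
      C * Real.exp x * x ^ (-(5:ℝ)/2) := by
  obtain ⟨C, hC, hbound⟩ := exists_abs_integral_sub_gaussian_le
  refine ⟨C, hC, 1, one_pos, fun x hx => ?_⟩
  have hx0 : 0 < x := one_pos.trans_le hx
  rw [besselII_eq_exp_mul, mul_right_comm, ← integral_sq_mul_exp_neg_half_mul_sq hx0,
    mul_comm _ (exp x), ← mul_sub, abs_mul, abs_of_pos (exp_pos x)]
  exact (mul_le_mul_of_nonneg_left (hbound x hx0) (exp_pos x).le).trans_eq (by ring)
end
end

section
/- For every real q with 0 < q < 1, the series ∑_{n≥1} s_1(n) q^n converges and equals (P(q)/P(q^2)) · log( P(q)/P(q^2)^2 ), where log denotes the real logarithm (the argument P(q)/P(q^2)^2 is a positive real number). -/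
open scoped Real
open MeasureTheory

noncomputable section

/-- `P(q) = ∏_{j ≥ 1} (1 - q^j)⁻¹`. -/
def Pgen (q : ℝ) : ℝ := (∏' j : ℕ, (1 - q ^ (j + 1)))⁻¹

/-!
Recording a partition into distinct parts by its set of parts `T`, the series is
`∑_T (∑_{t ∈ T} 1/t) q^{∑ T}` over finite sets `T` of positive integers. Over the subsets of a
finite set `S` this sum factors as `∏_{j ∈ S} (1 + q^j) · ∑_{j ∈ S} q^j / (j (1 + q^j))`, and
nonnegativity lets us pass to the limit. The product tends to `P(q) / P(q²)` since
`(1 + q^j)(1 - q^j) = 1 - q^{2j}`. Expanding `-log (1 - q^m) = ∑_j q^{mj}/j` and summing the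
geometric series in `m` first gives `∑_j q^j / (j (1 - q^j)) = log P(q)`, and
`q^j/(1 + q^j) = q^j/(1 - q^j) - 2 q^{2j}/(1 - q^{2j})` turns the sum into
`log P(q) - 2 log P(q²)`.
-/

open Filter Topology Real

lemma summable_pow_succ {x : ℝ} (hx : |x| < 1) : Summable (fun j : ℕ => x ^ (j + 1)) :=
  (summable_nat_add_iff 1).2 (summable_geometric_of_abs_lt_one hx)

lemma one_sub_pow_succ_pos {x : ℝ} (hx : |x| < 1) (j : ℕ) : 0 < 1 - x ^ (j + 1) := by
  have : x ^ (j + 1) < 1 :=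
    (le_abs_self _).trans_lt (by simpa [abs_pow] using pow_lt_one₀ (abs_nonneg x) hx j.succ_ne_zero)
  linarith

lemma summable_log_one_sub_pow {x : ℝ} (hx : |x| < 1) :
    Summable (fun j : ℕ => log (1 - x ^ (j + 1))) := by
  simpa [← sub_eq_add_neg] using Real.summable_log_one_add_of_summable (summable_pow_succ hx).neg

lemma Pgen_eq_exp {x : ℝ} (hx : |x| < 1) : Pgen x = exp (-∑' j : ℕ, log (1 - x ^ (j + 1))) := by
  rw [Pgen, ← Real.rexp_tsum_eq_tprod (one_sub_pow_succ_pos hx) (summable_log_one_sub_pow hx),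
    exp_neg]

lemma Pgen_pos {x : ℝ} (hx : |x| < 1) : 0 < Pgen x := by
  rw [Pgen_eq_exp hx]
  exact exp_pos _

lemma hasSum_neg_log_one_sub_pow {x : ℝ} (hx : |x| < 1) :
    HasSum (fun j : ℕ => -log (1 - x ^ (j + 1))) (log (Pgen x)) := by
  rw [Pgen_eq_exp hx, log_exp]
  exact (summable_log_one_sub_pow hx).hasSum.neg

lemma hasProd_one_sub_pow {x : ℝ} (hx : |x| < 1) :
    HasProd (fun j : ℕ => 1 - x ^ (j + 1)) (Pgen x)⁻¹ := by
  have := (Real.multipliable_one_add_of_summable (summable_pow_succ hx).neg).hasProd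
  simpa [Pgen, ← sub_eq_add_neg] using this

lemma abs_sq_lt_one {x : ℝ} (hx : |x| < 1) : |x ^ 2| < 1 := by
  rw [abs_pow]; exact pow_lt_one₀ (abs_nonneg x) hx two_ne_zero

lemma hasProd_one_add_pow {x : ℝ} (hx : |x| < 1) :
    HasProd (fun j : ℕ => 1 + x ^ (j + 1)) (Pgen x / Pgen (x ^ 2)) := by
  obtain ⟨D, hD⟩ := Real.multipliable_one_add_of_summable (summable_pow_succ hx)
  have hmul : HasProd (fun j : ℕ => 1 - (x ^ 2) ^ (j + 1)) (D * (Pgen x)⁻¹) := by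
    convert hD.mul (hasProd_one_sub_pow hx) using 2 with j
    ring
  have hD' : D * (Pgen x)⁻¹ = (Pgen (x ^ 2))⁻¹ :=
    hmul.unique (hasProd_one_sub_pow (abs_sq_lt_one hx))
  have := (Pgen_pos hx).ne'
  have := (Pgen_pos (abs_sq_lt_one hx)).ne'
  convert hD using 1
  field_simp at hD' ⊢
  linarith

lemma hasSum_pow_div_mul_one_sub_pow {x : ℝ} (hx0 : 0 ≤ x) (hx1 : x < 1) :
    HasSum (fun j : ℕ => x ^ (j + 1) / ((j + 1) * (1 - x ^ (j + 1)))) (log (Pgen x)) := by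
  have hx : |x| < 1 := by rwa [abs_of_nonneg hx0]
  -- Both sums are iterated sums of `F (m, j) = x ^ ((m + 1) * (j + 1)) / (j + 1)`.
  set F : ℕ × ℕ → ℝ := fun p => (x ^ (p.1 + 1)) ^ (p.2 + 1) / (p.2 + 1)
  have hlog (m : ℕ) : HasSum (fun j => F (m, j)) (-log (1 - x ^ (m + 1))) := by
    refine Real.hasSum_pow_div_log_of_abs_lt_one (x := x ^ (m + 1)) ?_
    rw [abs_pow]; exact pow_lt_one₀ (abs_nonneg x) hx m.succ_ne_zero
  have hgeom (j : ℕ) :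
      HasSum (fun m => F (m, j)) (x ^ (j + 1) / ((j + 1) * (1 - x ^ (j + 1)))) := by
    have hterm : (fun m => F (m, j)) = fun m => x ^ (j + 1) / (j + 1) * (x ^ (j + 1)) ^ m := by
      ext m; simp only [F]; ring
    rw [hterm, div_mul_eq_div_div, div_eq_mul_inv _ (1 - _)]
    exact (hasSum_geometric_of_lt_one (by positivity)
      (by linarith [one_sub_pow_succ_pos hx j])).mul_left _
  have hF : Summable F :=
    (summable_prod_of_nonneg (fun _ => by positivity)).2
      ⟨fun m => (hlog m).summable,
        (hasSum_neg_log_one_sub_pow hx).summable.congr fun m => (hlog m).tsum_eq.symm⟩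
  have h₁ := hF.hasSum.prod_fiberwise hlog
  have h₂ := hF.prod_symm.hasSum.prod_fiberwise hgeom
  have hswap : ∑' p : ℕ × ℕ, F p.swap = ∑' p, F p := (Equiv.prodComm ℕ ℕ).tsum_eq F
  rwa [hswap, h₁.unique (hasSum_neg_log_one_sub_pow hx)] at h₂

lemma hasSum_one_div_mul_pow_div_one_add_pow {x : ℝ} (hx0 : 0 ≤ x) (hx1 : x < 1) :
    HasSum (fun j : ℕ => 1 / (j + 1) * x ^ (j + 1) / (1 + x ^ (j + 1)))
      (log (Pgen x / Pgen (x ^ 2) ^ 2)) := by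
  have hx : |x| < 1 := by rwa [abs_of_nonneg hx0]
  have h := (hasSum_pow_div_mul_one_sub_pow hx0 hx1).sub
    ((hasSum_pow_div_mul_one_sub_pow (sq_nonneg x) (abs_lt.1 (abs_sq_lt_one hx)).2).mul_left 2)
  rw [log_div (Pgen_pos hx).ne' (pow_pos (Pgen_pos (abs_sq_lt_one hx)) 2).ne', log_pow]
  refine h.congr_fun fun j => ?_
  have h₁ := one_sub_pow_succ_pos hx j
  have h₂ : 0 < 1 + x ^ (j + 1) := by positivity
  rw [show (x ^ 2) ^ (j + 1) = (x ^ (j + 1)) ^ 2 by ring]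
  generalize x ^ (j + 1) = y at h₁ h₂ ⊢
  rw [show 1 - y ^ 2 = (1 - y) * (1 + y) by ring]
  field_simp
  ring

theorem Finset.sum_powerset_sum_mul_prod {ι K : Type*} [DecidableEq ι] [Field K] (w a : ι → K)
    (s : Finset ι) (ha : ∀ i ∈ s, 1 + a i ≠ 0) :
    ∑ T ∈ s.powerset, (∑ i ∈ T, w i) * ∏ i ∈ T, a i =
      (∏ i ∈ s, (1 + a i)) * ∑ i ∈ s, w i * a i / (1 + a i) := by
  induction s using Finset.induction_on with
  | empty => simp
  | @insert k s hk ih =>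
    have hT : ∀ T ∈ s.powerset, (∑ i ∈ insert k T, w i) * ∏ i ∈ insert k T, a i =
        a k * ((∑ i ∈ T, w i) * ∏ i ∈ T, a i) + w k * a k * ∏ i ∈ T, a i := by
      intro T hTs
      have hkT : k ∉ T := fun h => hk (Finset.mem_powerset.1 hTs h)
      rw [Finset.sum_insert hkT, Finset.prod_insert hkT]
      ring
    have hk' := ha k (Finset.mem_insert_self k s)
    rw [Finset.sum_powerset_insert hk, Finset.sum_congr rfl hT, Finset.sum_add_distrib,
      ← Finset.mul_sum, ← Finset.mul_sum, ← Finset.prod_one_add,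
      ih fun i hi => ha i (Finset.mem_insert_of_mem hi), Finset.prod_insert hk, Finset.sum_insert hk]
    field_simp
    ring

theorem hasSum_of_tendsto_sum_powerset {ι : Type*} {f : Finset ι → ℝ} {a : ℝ} (hf : 0 ≤ f)
    (h : Tendsto (fun s : Finset ι => ∑ T ∈ s.powerset, f T) atTop (𝓝 a)) : HasSum f a := by
  classical
  have hmono : Monotone fun s : Finset ι => ∑ T ∈ s.powerset, f T := fun s t hst =>
    Finset.sum_le_sum_of_subset_of_nonneg (Finset.powerset_mono.2 hst) fun T _ _ => hf T
  refine hasSum_of_isLUB_of_nonneg a hf ⟨?_, fun b hb => ?_⟩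
  · rintro _ ⟨𝒯, rfl⟩
    have h𝒯 : 𝒯 ⊆ (𝒯.sup id).powerset := fun T hT =>
      Finset.mem_powerset.2 (Finset.le_sup (f := id) hT)
    exact (Finset.sum_le_sum_of_subset_of_nonneg h𝒯 fun T _ _ => hf T).trans
      (hmono.ge_of_tendsto h _)
  · exact le_of_tendsto' h fun s => hb ⟨s.powerset, rfl⟩

theorem hasSum_sum_mul_prod_of_hasProd {ι : Type*} {w a : ι → ℝ} {D L : ℝ} (hw : 0 ≤ w)
    (ha : 0 ≤ a) (hD : HasProd (fun i => 1 + a i) D)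
    (hL : HasSum (fun i => w i * a i / (1 + a i)) L) :
    HasSum (fun T : Finset ι => (∑ i ∈ T, w i) * ∏ i ∈ T, a i) (D * L) := by
  classical
  have hD' : Tendsto (fun s => ∏ i ∈ s, (1 + a i)) atTop (𝓝 D) := hD
  refine hasSum_of_tendsto_sum_powerset
    (fun T => mul_nonneg (Finset.sum_nonneg fun i _ => hw i) (Finset.prod_nonneg fun i _ => ha i))
    ((hD'.mul hL).congr fun s => ?_)
  exact (Finset.sum_powerset_sum_mul_prod w a s fun i _ =>
    (add_pos_of_pos_of_nonneg one_pos (ha i)).ne').symm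

lemma Nat.Partition.mem_distincts {n : ℕ} {p : n.Partition} :
    p ∈ Nat.Partition.distincts n ↔ p.parts.Nodup := by
  simp [Nat.Partition.distincts]

lemma Nat.Partition.map_add_one_map_sub_one {n : ℕ} (p : n.Partition) :
    (p.parts.map (· - 1)).map (· + 1) = p.parts := by
  rw [Multiset.map_map]
  conv_rhs => rw [← Multiset.map_id p.parts]
  exact Multiset.map_congr rfl fun j hj => Nat.sub_add_cancel (p.parts_pos hj)

-- Parts are shifted down by one so that the sets of parts range over all of `Finset ℕ`.
def distinctsEquiv (n : ℕ) :
    Nat.Partition.distincts n ≃ {T : Finset ℕ // ∑ i ∈ T, (i + 1) = n} where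
  toFun p := ⟨⟨p.1.parts.map (· - 1),
      (Multiset.nodup_map_iff_of_injective (add_left_injective 1)).1 <| by
        rw [p.1.map_add_one_map_sub_one]; exact Nat.Partition.mem_distincts.1 p.2⟩,
    by rw [Finset.sum, p.1.map_add_one_map_sub_one, p.1.parts_sum]⟩
  invFun T := ⟨⟨T.1.val.map (· + 1), by simp, T.2⟩,
    Nat.Partition.mem_distincts.2 (T.1.nodup.map (add_left_injective 1))⟩
  left_inv p := Subtype.ext (Nat.Partition.ext p.1.map_add_one_map_sub_one)
  right_inv T := Subtype.ext (Finset.val_injective (by simp [Multiset.map_map]))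

lemma sum_one_div_distinctsEquiv {n : ℕ} (p : Nat.Partition.distincts n) :
    ∑ i ∈ (distinctsEquiv n p).1, 1 / ((i : ℝ) + 1) =
      (p.1.parts.map fun j => (1 : ℝ) / j).sum := by
  change ((p.1.parts.map (· - 1)).map fun i : ℕ => 1 / ((i : ℝ) + 1)).sum = _
  simp only [bind_pure_comp, Multiset.fmap_def, Multiset.map_map]
  refine congrArg _ (Multiset.map_congr rfl fun j hj => ?_)
  rw [Function.comp_apply, Function.comp_apply, ← Nat.cast_add_one,
    Nat.sub_add_cancel (p.1.parts_pos hj)]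

lemma hasSum_s1_mul_pow_of_hasSum {q S : ℝ}
    (h : HasSum (fun T : Finset ℕ => (∑ i ∈ T, 1 / ((i : ℝ) + 1)) * ∏ i ∈ T, q ^ (i + 1)) S) :
    HasSum (fun n => s1 n * q ^ n) S := by
  refine HasSum.sigma ((Equiv.sigmaFiberEquiv fun T : Finset ℕ => ∑ i ∈ T, (i + 1)).hasSum_iff.2 h)
    fun n => ?_
  rw [← (distinctsEquiv n).hasSum_iff, s1, Finset.sum_mul, ← Finset.sum_coe_sort]
  refine (hasSum_fintype _).congr_fun fun p => ?_
  simp only [Function.comp_apply, Equiv.sigmaFiberEquiv_apply]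
  rw [sum_one_div_distinctsEquiv, Finset.prod_pow_eq_pow_sum, (distinctsEquiv n p).2]

lemma s1_zero : s1 0 = 0 := by
  simp [s1]

theorem stmt9 (q : ℝ) (hq0 : 0 < q) (hq1 : q < 1) :
    Summable (fun n : ℕ => s1 (n + 1) * q ^ (n + 1)) ∧
    ∑' n : ℕ, s1 (n + 1) * q ^ (n + 1) =
      Pgen q / Pgen (q ^ 2) * Real.log (Pgen q / Pgen (q ^ 2) ^ 2) := by
  have hsubsets := hasSum_sum_mul_prod_of_hasProd (fun i => by positivity) (fun i => by positivity)
    (hasProd_one_add_pow (abs_lt.2 ⟨by linarith, hq1⟩))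
    (hasSum_one_div_mul_pow_div_one_add_pow hq0.le hq1)
  have hs1 : HasSum (fun n => s1 (n + 1) * q ^ (n + 1))
      (Pgen q / Pgen (q ^ 2) * log (Pgen q / Pgen (q ^ 2) ^ 2)) := by
    rw [hasSum_nat_add_iff (f := fun n => s1 n * q ^ n), Finset.sum_range_one, s1_zero, zero_mul,
      add_zero]
    exact hasSum_s1_mul_pow_of_hasSum hsubsets
  exact ⟨hs1.summable, hs1.tsum_eq⟩
end
end

section
/- For all coprime integers h, k with k ≥ 1 odd, one has k ∑_{ℓ=1}^{2k} (−1)^ℓ B_2(ℓ/(2k)) Li_2(e^{2πihℓ/k}) = (3k−1)π^2/48 + π^2 k ∑_{ℓ=1}^{2k} (−1)^ℓ ((hℓ/k))^2 B_2(ℓ/(2k)). -/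
open scoped Real
open MeasureTheory

noncomputable section

/-- `L(q) = ∑_{r≥1} q^r/(r²(1+q^r)²)`. -/
def Lq (q : ℂ) : ℂ := ∑' r : ℕ, q ^ (r + 1) / (((r : ℂ) + 1) ^ 2 * (1 + q ^ (r + 1)) ^ 2)

/-- The dilogarithm `Li₂(w) = ∑_{n≥1} wⁿ/n²`. -/
def Li2 (w : ℂ) : ℂ := ∑' n : ℕ, w ^ (n + 1) / ((n : ℂ) + 1) ^ 2

/-- The `m`-th Bernoulli polynomial evaluated at a real number. -/
def bernPoly (m : ℕ) (x : ℝ) : ℝ := Polynomial.aeval x (Polynomial.bernoulli m)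

/-! Termwise, `Li₂(e(x)) + Li₂(e(-x)) = 2 ∑ cos(2πnx)/n² = 2π² B₂({x})`. The weights
`(-1)^ℓ B₂(ℓ/2k)` are invariant under `ℓ ↦ 2k - ℓ`, which conjugates `e(hℓ/k)`, so the left side
is `π² k ∑ (-1)^ℓ B₂(ℓ/2k) B₂({hℓ/k})`. Finally `B₂({x}) = ((x))² - 1/12` off the integers and
`1/6` on them; by coprimality `hℓ/k` is an integer only for `ℓ = k, 2k`, and together with
`∑ (-1)^ℓ B₂(ℓ/2k) = 1/(4k)` this produces the constant `(3k - 1)π²/48`. -/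

open Complex Finset

lemma bernPoly_eq_bernoulliFun (m : ℕ) (x : ℝ) : bernPoly m x = bernoulliFun m x := by
  rw [bernPoly, bernoulliFun, Polynomial.aeval_def, Polynomial.eval_map]

lemma exp_two_pi_I_mul_add_intCast (z : ℂ) (m : ℤ) :
    exp (2 * π * I * (z + m)) = exp (2 * π * I * z) := by
  rw [mul_add, mul_comm _ (m : ℂ)]
  exact exp_periodic.int_mul m _

lemma summable_Li2 {w : ℂ} (hw : ‖w‖ ≤ 1) :
    Summable fun n : ℕ => w ^ (n + 1) / ((n : ℂ) + 1) ^ 2 := by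
  have hbound : Summable fun n : ℕ => 1 / ((n : ℝ) + 1) ^ 2 := by
    simpa using (summable_nat_add_iff 1).mpr (Real.summable_one_div_nat_pow.mpr one_lt_two)
  refine hbound.of_norm_bounded fun n => ?_
  rw [norm_div, norm_pow, norm_pow, ← Nat.cast_add_one, Complex.norm_natCast, Nat.cast_add_one]
  gcongr
  exact pow_le_one₀ (norm_nonneg w) hw

lemma hasSum_cos_div_sq {y : ℝ} (hy : y ∈ Set.Icc (0 : ℝ) 1) :
    HasSum (fun n : ℕ => Real.cos (2 * π * (n + 1) * y) / ((n : ℝ) + 1) ^ 2)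
      (π ^ 2 * bernoulliFun 2 y) := by
  have h := (hasSum_nat_add_iff' 1).mpr (hasSum_one_div_nat_pow_mul_cos one_ne_zero hy)
  rw [← bernoulliFun] at h
  norm_num [Nat.factorial, -bernoulliFun_two, div_eq_inv_mul] at h
  rw [show (1 : ℝ) / 2 * (1 / 2 * (2 * π) ^ 2) = π ^ 2 by ring] at h
  simpa only [div_eq_inv_mul] using h

lemma Li2_exp_add_Li2_exp_neg (x : ℝ) :
    Li2 (exp (2 * π * I * x)) + Li2 (exp (-(2 * π * I * x))) =
      2 * π ^ 2 * bernoulliFun 2 (Int.fract x) := by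
  set y := Int.fract x
  have hx : (x : ℂ) = y + ⌊x⌋ := by rw [← ofReal_intCast, ← ofReal_add, Int.fract_add_floor]
  have hneg : -(2 * π * I * (x : ℂ)) = 2 * π * I * (-y + (-⌊x⌋ : ℤ)) := by
    rw [hx]
    push_cast
    ring
  rw [hneg, hx, exp_two_pi_I_mul_add_intCast, exp_two_pi_I_mul_add_intCast]
  have hterm (n : ℕ) : exp (2 * π * I * y) ^ (n + 1) / ((n : ℂ) + 1) ^ 2 +
      exp (2 * π * I * -y) ^ (n + 1) / ((n : ℂ) + 1) ^ 2 =
      ((2 * (Real.cos (2 * π * (n + 1) * y) / ((n : ℝ) + 1) ^ 2) : ℝ) : ℂ) := by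
    set θ : ℝ := 2 * π * (n + 1) * y
    have h₁ : exp (2 * π * I * y) ^ (n + 1) = exp (θ * I) := by
      rw [← exp_nat_mul]; push_cast [θ]; ring_nf
    have h₂ : exp (2 * π * I * -y) ^ (n + 1) = exp (-θ * I) := by
      rw [← exp_nat_mul]; push_cast [θ]; ring_nf
    rw [h₁, h₂, ← add_div, ← two_cos]
    push_cast
    ring
  have hnorm (t : ℝ) : ‖exp (2 * π * I * t)‖ ≤ 1 := by
    rw [norm_exp]; simp
  have hsum := (summable_Li2 (hnorm y)).hasSum.add (summable_Li2 (hnorm (-y))).hasSum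
  push_cast at hsum
  simp only [hterm] at hsum
  have hreal := hasSum_ofReal.mpr
    ((hasSum_cos_div_sq (y := y) ⟨Int.fract_nonneg x, (Int.fract_lt_one x).le⟩).mul_left 2)
  rw [Li2, Li2, hsum.unique hreal]
  push_cast
  ring

lemma sum_Icc_one_reflect {M : Type*} [AddCommMonoid M] (f : ℕ → M) {n : ℕ} (h : f 0 = f n) :
    ∑ ℓ ∈ Icc 1 n, f (n - ℓ) = ∑ ℓ ∈ Icc 1 n, f ℓ := by
  rcases Nat.eq_zero_or_pos n with rfl | hn
  · rfl
  rw [← Ico_add_one_right_eq_Icc, sum_Ico_succ_top hn, sum_Ico_succ_top hn,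
    sum_Ico_reflect f 1 (Nat.le_succ n), Nat.sub_self, h, Nat.add_sub_cancel,
    Nat.add_sub_cancel_left]

lemma sum_mul_Li2_exp_eq_of_symm {n : ℕ} {A : ℕ → ℝ} {c : ℝ}
    (hA : ∀ ℓ ≤ n, A (n - ℓ) = A ℓ) (hc : ∃ m : ℤ, n * c = m) :
    ∑ ℓ ∈ Icc 1 n, (A ℓ : ℂ) * Li2 (exp (2 * π * I * (ℓ * c : ℝ))) =
      ((π ^ 2 * ∑ ℓ ∈ Icc 1 n, A ℓ * bernoulliFun 2 (Int.fract (ℓ * c)) : ℝ) : ℂ) := by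
  obtain ⟨m, hm⟩ := hc
  have hmC : (n : ℂ) * c = m := by exact_mod_cast hm
  set f : ℕ → ℂ := fun ℓ => (A ℓ : ℂ) * Li2 (exp (-(2 * π * I * (ℓ * c : ℝ))))
  have hreflect : ∀ ℓ ∈ Icc 1 n, f (n - ℓ) = A ℓ * Li2 (exp (2 * π * I * (ℓ * c : ℝ))) := by
    intro ℓ hℓ
    have hle : ℓ ≤ n := (mem_Icc.mp hℓ).2
    have harg : -(2 * π * I * (((n - ℓ : ℕ) : ℝ) * c : ℝ)) =
        2 * π * I * ((ℓ * c : ℝ) + (-m : ℤ)) := by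
      push_cast [Nat.cast_sub hle]
      linear_combination -2 * π * I * hmC
    simp only [f, hA ℓ hle, harg, exp_two_pi_I_mul_add_intCast]
  have hends : f 0 = f n := by
    have harg : -(2 * π * I * ((n : ℝ) * c : ℝ)) = 2 * π * I * ((0 : ℂ) + (-m : ℤ)) := by
      push_cast
      linear_combination -2 * π * I * hmC
    simp only [f, harg, exp_two_pi_I_mul_add_intCast, ← hA n le_rfl, Nat.sub_self]
    simp
  have hsym : ∑ ℓ ∈ Icc 1 n, (A ℓ : ℂ) * Li2 (exp (2 * π * I * (ℓ * c : ℝ))) =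
      ∑ ℓ ∈ Icc 1 n, f ℓ := by
    rw [← sum_Icc_one_reflect f hends]
    exact (sum_congr rfl hreflect).symm
  refine mul_left_cancel₀ (two_ne_zero (α := ℂ)) ?_
  rw [two_mul (∑ ℓ ∈ Icc 1 n, _)]
  nth_rewrite 2 [hsym]
  rw [← sum_add_distrib, ofReal_mul, ofReal_sum, mul_sum, mul_sum]
  refine sum_congr rfl fun ℓ _ => ?_
  rw [← mul_add, Li2_exp_add_Li2_exp_neg]
  push_cast
  ring

lemma saw_natCast (n : ℕ) : saw n = 0 := if_pos ⟨n, by simp⟩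

lemma bernoulliFun_two_fract_of_not_int {x : ℝ} (hx : ¬∃ m : ℤ, x = m) :
    bernoulliFun 2 (Int.fract x) = saw x ^ 2 - 1 / 12 := by
  rw [saw, if_neg hx, bernoulliFun_two, Int.fract]
  ring

lemma exists_int_eq_natCast_div_iff {n k : ℕ} (hk : k ≠ 0) :
    (∃ m : ℤ, (n : ℝ) / k = m) ↔ k ∣ n := by
  have hk' : (k : ℝ) ≠ 0 := by exact_mod_cast hk
  constructor
  · rintro ⟨m, hm⟩
    rw [div_eq_iff hk'] at hm
    exact Int.natCast_dvd_natCast.mp ⟨m, by rw [mul_comm]; exact_mod_cast hm⟩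
  · rintro ⟨j, rfl⟩
    exact ⟨j, by push_cast; field_simp⟩

lemma eq_or_eq_two_mul_of_dvd {k ℓ : ℕ} (hℓ : ℓ ∈ Icc 1 (2 * k)) (hdvd : k ∣ ℓ) :
    ℓ = k ∨ ℓ = 2 * k := by
  obtain ⟨c, rfl⟩ := hdvd
  obtain ⟨h1, h2⟩ := mem_Icc.mp hℓ
  rcases Nat.eq_zero_or_pos k with rfl | hk
  · simp at h1
  have hc : c ≤ 2 := Nat.le_of_mul_le_mul_left (by linarith) hk
  interval_cases c <;> omega

lemma sum_Icc_neg_one_pow_mul_quadratic (a b c : ℝ) (n : ℕ) :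
    ∑ ℓ ∈ Icc 1 (2 * n), (-1 : ℝ) ^ ℓ * (a * ℓ ^ 2 + b * ℓ + c) =
      a * (2 * n ^ 2 + n) + b * n := by
  induction n with
  | zero => simp
  | succ n ih =>
    rw [show 2 * (n + 1) = 2 * n + 1 + 1 by ring, sum_Icc_succ_top (by omega),
      sum_Icc_succ_top (by omega), ih]
    simp only [pow_succ, pow_mul]
    push_cast
    ring

lemma sum_neg_one_pow_mul_bernoulliFun_two {k : ℕ} (hk : k ≠ 0) :
    ∑ ℓ ∈ Icc 1 (2 * k), (-1 : ℝ) ^ ℓ * bernoulliFun 2 (ℓ / (2 * k)) = 1 / (4 * k) := by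
  have hk' : (k : ℝ) ≠ 0 := by exact_mod_cast hk
  calc _ = ∑ ℓ ∈ Icc 1 (2 * k),
        (-1 : ℝ) ^ ℓ * (1 / (2 * k) ^ 2 * ℓ ^ 2 + -(1 / (2 * k)) * ℓ + 6⁻¹) :=
        sum_congr rfl fun ℓ _ => by rw [bernoulliFun_two]; ring
    _ = 1 / (4 * (k : ℝ)) := by
      rw [sum_Icc_neg_one_pow_mul_quadratic]
      field_simp
      ring

lemma neg_one_pow_mul_bernoulliFun_two_reflect {k ℓ : ℕ} (hℓ : ℓ ≤ 2 * k) :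
    (-1 : ℝ) ^ (2 * k - ℓ) * bernoulliFun 2 ((2 * k - ℓ : ℕ) / (2 * k)) =
      (-1) ^ ℓ * bernoulliFun 2 (ℓ / (2 * k)) := by
  rcases Nat.eq_zero_or_pos k with rfl | hk
  · obtain rfl : ℓ = 0 := by omega
    rfl
  have hk' : (k : ℝ) ≠ 0 := by positivity
  have hsign : (-1 : ℝ) ^ (2 * k - ℓ) = (-1) ^ ℓ :=
    neg_one_pow_congr (by simp [Nat.even_sub hℓ])
  have harg : ((2 * k - ℓ : ℕ) : ℝ) / (2 * k) = 1 - ℓ / (2 * k) := by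
    rw [Nat.cast_sub hℓ]
    field_simp
    push_cast
    ring
  rw [hsign, harg, bernoulliFun_eval_one_sub]
  norm_num

lemma sum_mul_bernoulliFun_two_fract_sub_saw_sq {h k : ℕ} (hk : k ≠ 0) (hcop : h.Coprime k)
    (A : ℕ → ℝ) :
    ∑ ℓ ∈ Icc 1 (2 * k), A ℓ * (bernoulliFun 2 (Int.fract ((h * ℓ : ℕ) / k)) -
        saw ((h * ℓ : ℕ) / k) ^ 2 + 1 / 12) = (A k + A (2 * k)) / 4 := by
  have hk' : (k : ℝ) ≠ 0 := by exact_mod_cast hk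
  have hdvd_iff (ℓ : ℕ) : k ∣ h * ℓ ↔ k ∣ ℓ := hcop.symm.dvd_mul_left
  have hsub : {k, 2 * k} ⊆ Icc 1 (2 * k) := by
    intro ℓ hℓ
    simp only [mem_insert, mem_singleton] at hℓ
    rw [mem_Icc]
    omega
  have hoff : ∀ ℓ ∈ Icc 1 (2 * k), ℓ ∉ ({k, 2 * k} : Finset ℕ) →
      A ℓ * (bernoulliFun 2 (Int.fract ((h * ℓ : ℕ) / k)) -
        saw ((h * ℓ : ℕ) / k) ^ 2 + 1 / 12) = 0 := by
    intro ℓ hℓ hnot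
    have hx : ¬∃ m : ℤ, ((h * ℓ : ℕ) : ℝ) / k = m := by
      rw [exists_int_eq_natCast_div_iff hk, hdvd_iff]
      intro hdvd
      simpa using hnot (by simpa using eq_or_eq_two_mul_of_dvd hℓ hdvd)
    rw [bernoulliFun_two_fract_of_not_int hx]
    ring
  have hon (ℓ : ℕ) (hdvd : k ∣ ℓ) :
      A ℓ * (bernoulliFun 2 (Int.fract ((h * ℓ : ℕ) / k)) -
        saw ((h * ℓ : ℕ) / k) ^ 2 + 1 / 12) = A ℓ / 4 := by
    rw [← Nat.cast_div ((hdvd_iff ℓ).mpr hdvd) hk', Int.fract_natCast, saw_natCast,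
      bernoulliFun_two]
    ring
  rw [← sum_subset hsub hoff, sum_pair (by omega), hon k dvd_rfl, hon (2 * k) (dvd_mul_left k 2)]
  ring

lemma sum_mul_bernoulliFun_two_fract {h k : ℕ} (hodd : Odd k) (hcop : h.Coprime k) :
    ∑ ℓ ∈ Icc 1 (2 * k), (-1 : ℝ) ^ ℓ * bernoulliFun 2 (ℓ / (2 * k)) *
        bernoulliFun 2 (Int.fract ((h * ℓ : ℕ) / k)) =
      ∑ ℓ ∈ Icc 1 (2 * k), (-1 : ℝ) ^ ℓ * saw ((h * ℓ : ℕ) / k) ^ 2 *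
        bernoulliFun 2 (ℓ / (2 * k)) - 1 / (48 * k) + 1 / 16 := by
  have hk : k ≠ 0 := hodd.pos.ne'
  have hk' : (k : ℝ) ≠ 0 := by exact_mod_cast hk
  set A : ℕ → ℝ := fun ℓ => (-1 : ℝ) ^ ℓ * bernoulliFun 2 (ℓ / (2 * k))
  set x : ℕ → ℝ := fun ℓ => (h * ℓ : ℕ) / k
  have hAk : A k = 1 / 12 := by
    simp only [A, hodd.neg_one_pow, bernoulliFun_two]
    field_simp
    ring
  have hA2k : A (2 * k) = 1 / 6 := by
    simp only [A, (even_two_mul k).neg_one_pow, bernoulliFun_two]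
    push_cast
    field_simp
    ring
  calc _ = ∑ ℓ ∈ Icc 1 (2 * k), ((-1 : ℝ) ^ ℓ * saw (x ℓ) ^ 2 * bernoulliFun 2 (ℓ / (2 * k)) -
        1 / 12 * A ℓ + A ℓ * (bernoulliFun 2 (Int.fract (x ℓ)) - saw (x ℓ) ^ 2 + 1 / 12)) :=
        sum_congr rfl fun ℓ _ => by ring
    _ = _ := by
      rw [sum_add_distrib, sum_sub_distrib, ← mul_sum, sum_neg_one_pow_mul_bernoulliFun_two hk,
        sum_mul_bernoulliFun_two_fract_sub_saw_sq hk hcop, hAk, hA2k]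
      field_simp
      ring

theorem stmt16_general (h k : ℕ) (hodd : Odd k) (hcop : Nat.Coprime h k) :
    (k : ℂ) * ∑ ℓ ∈ Finset.Icc 1 (2 * k),
        (-1 : ℂ) ^ ℓ * (bernPoly 2 ((ℓ : ℝ) / (2 * k)) : ℂ) *
          Li2 (Complex.exp (2 * Real.pi * Complex.I * h * ℓ / k)) =
      (((3 * (k : ℝ) - 1) * Real.pi ^ 2 / 48 : ℝ) : ℂ) +
        ((Real.pi ^ 2 * (k : ℝ) * ∑ ℓ ∈ Finset.Icc 1 (2 * k),
            (-1 : ℝ) ^ ℓ * saw (((h * ℓ : ℕ) : ℝ) / k) ^ 2 *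
              bernPoly 2 ((ℓ : ℝ) / (2 * k)) : ℝ) : ℂ) := by
  have hk : (k : ℝ) ≠ 0 := by exact_mod_cast hodd.pos.ne'
  have hterm : ∀ ℓ ∈ Icc 1 (2 * k),
      (-1 : ℂ) ^ ℓ * (bernPoly 2 ((ℓ : ℝ) / (2 * k)) : ℂ) *
        Li2 (exp (2 * π * I * h * ℓ / k)) =
      (((-1 : ℝ) ^ ℓ * bernoulliFun 2 (ℓ / (2 * k)) : ℝ) : ℂ) *
        Li2 (exp (2 * π * I * (ℓ * (h / k) : ℝ))) := by
    intro ℓ _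
    rw [bernPoly_eq_bernoulliFun]
    push_cast
    congr 3
    ring
  have hx (ℓ : ℕ) : (ℓ : ℝ) * (h / k) = (h * ℓ : ℕ) / k := by
    push_cast
    ring
  rw [sum_congr rfl hterm,
    sum_mul_Li2_exp_eq_of_symm (A := fun ℓ => (-1 : ℝ) ^ ℓ * bernoulliFun 2 (ℓ / (2 * k)))
      (fun ℓ hℓ => neg_one_pow_mul_bernoulliFun_two_reflect hℓ) ⟨2 * h, by push_cast; field_simp⟩]
  simp only [hx, bernPoly_eq_bernoulliFun]
  rw [sum_mul_bernoulliFun_two_fract hodd hcop, ← ofReal_natCast, ← ofReal_mul, ← ofReal_add,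
    ofReal_inj]
  field_simp
  ring

theorem stmt16 (h k : ℕ) (hk : 1 ≤ k) (hodd : Odd k) (hcop : Nat.Coprime h k) :
    (k : ℂ) * ∑ ℓ ∈ Finset.Icc 1 (2 * k),
        (-1 : ℂ) ^ ℓ * (bernPoly 2 ((ℓ : ℝ) / (2 * k)) : ℂ) *
          Li2 (Complex.exp (2 * Real.pi * Complex.I * h * ℓ / k)) =
      (((3 * (k : ℝ) - 1) * Real.pi ^ 2 / 48 : ℝ) : ℂ) +
        ((Real.pi ^ 2 * (k : ℝ) * ∑ ℓ ∈ Finset.Icc 1 (2 * k),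
            (-1 : ℝ) ^ ℓ * saw (((h * ℓ : ℕ) : ℝ) / k) ^ 2 *
              bernPoly 2 ((ℓ : ℝ) / (2 * k)) : ℝ) : ℂ) :=
  stmt16_general h k hodd hcop
end
end
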